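/- arXiv:2402.17746 — 2 statements merged into one kernel-verified Lean document; each statement's English description precedes it below -/
import Mathlib

section
/- Let V be a graded vector space and S(V) its graded symmetric algebra with product ∨. Let E* = ⊕_{i=1}^{n} S(V)_i (the components of S(V) in degrees 1 through n, where V is concentrated in degrees 1..n), viewed as a graded vector space, and let T be the free graded-commutative algebra on E* with product ·. Let I ⊆ T be the two-sided ideal generated by all elements ω·η - (ω ∨ η) for homogeneous ω, η ∈ E* with |ω| + |η| ≤ n (where ω ∨ η ∈ S(V)_{|ω|+|η|} ⊆ E*). Then the natural algebra map S(V) → T/I, sending v₁ ∨ ... ∨ v_k (vⱼ ∈ V) to the class of v₁ · ... · v_k, is an isomorphism of graded algebras. -/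
universe u v

variable (k : Type u) [Field k]

/-- Graded-commutativity (Koszul sign rule). -/
def IsGradedComm {D : Type v} [Ring D] [Algebra k D] (𝒟 : ℕ → Submodule k D) : Prop :=
  ∀ (i j : ℕ), ∀ a ∈ 𝒟 i, ∀ b ∈ 𝒟 j, a * b = ((-1 : ℤ) ^ (i * j)) • (b * a)

/-- `S` (graded by `𝒮`) is the graded symmetric algebra `S(V)` on graded
generating subspaces `V i ⊆ 𝒮 i`: graded-commutative, with the universal
property for maps of the generators into graded-commutative algebras. -/
def IsFreeGradedCommOn {S : Type v} [Ring S] [Algebra k S]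
    (𝒮 : ℕ → Submodule k S) (V : ℕ → Submodule k S) : Prop :=
  (∀ i, V i ≤ 𝒮 i) ∧ IsGradedComm k 𝒮 ∧
  ∀ (D : Type v) (_ : Ring D) (_ : Algebra k D) (𝒟 : ℕ → Submodule k D),
    (∀ (i j : ℕ), ∀ a ∈ 𝒟 i, ∀ b ∈ 𝒟 j, a * b ∈ 𝒟 (i + j)) →
    IsGradedComm k 𝒟 →
    ∀ f : ∀ i, (V i) →ₗ[k] D, (∀ i v, f i v ∈ 𝒟 i) →
    ∃! F : S →ₐ[k] D, ∀ i (v : V i), F (v : S) = f i v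

/-!
Both maps come from universal properties: `S(V) → T/I` sends `v` to the class of `v`, and
`T → S(V)` sends `ω ∈ E*` to `ω` itself, which kills `I` and so descends to `T/I`. The composite
on `S(V)` fixes `V`, hence is the identity. For the composite on `T/I` it remains to see that
`S(V) → T/I` sends every `ω ∈ S(V)ᵢ`, `1 ≤ i ≤ n`, to the class of `ω`. The elements of degree
`i ≤ n` for which this holds, together with the scalars in degree `0` and everything above
degree `n`, form a graded family closed under products (this is exactly what the relations of `I`
say) that contains `V`; as `V` generates `S(V)`, the family exhausts every `S(V)ᵢ`.
-/

open DirectSum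

section GradedFamilies

variable {k} {D E : Type v} [Ring D] [Ring E] [Algebra k D] [Algebra k E]

theorem IsGradedComm.map {𝒟 : ℕ → Submodule k D} (h : IsGradedComm k 𝒟) (f : D →ₐ[k] E) :
    IsGradedComm k fun i => (𝒟 i).map f.toLinearMap := by
  rintro i j _ ⟨a, ha, rfl⟩ _ ⟨b, hb, rfl⟩
  simp only [AlgHom.toLinearMap_apply, ← map_mul, h i j a ha b hb, map_zsmul]

theorem IsGradedComm.comap {ℰ : ℕ → Submodule k E} (h : IsGradedComm k ℰ) (f : D →ₐ[k] E)
    (hf : Function.Injective f) : IsGradedComm k fun i => (ℰ i).comap f.toLinearMap := by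
  intro i j a ha b hb
  apply hf
  simpa only [AlgHom.toLinearMap_apply, map_mul, map_zsmul] using h i j _ ha _ hb

end GradedFamilies

theorem SetLike.GradedMonoid.map {R A B : Type*} [CommSemiring R] [Semiring A] [Semiring B]
    [Algebra R A] [Algebra R B] (𝒜 : ℕ → Submodule R A) [SetLike.GradedMonoid 𝒜]
    (f : A →ₐ[R] B) : SetLike.GradedMonoid fun i => (𝒜 i).map f.toLinearMap where
  one_mem := ⟨1, SetLike.one_mem_graded 𝒜, map_one f⟩
  mul_mem := by
    rintro i j _ _ ⟨a, ha, rfl⟩ ⟨b, hb, rfl⟩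
    exact ⟨a * b, SetLike.mul_mem_graded ha hb, map_mul f a b⟩

theorem SetLike.GradedMonoid.comap {R A B : Type*} [CommSemiring R] [Semiring A] [Semiring B]
    [Algebra R A] [Algebra R B] (ℬ : ℕ → Submodule R B) [SetLike.GradedMonoid ℬ]
    (f : A →ₐ[R] B) : SetLike.GradedMonoid fun i => (ℬ i).comap f.toLinearMap where
  one_mem := by simpa using SetLike.one_mem_graded ℬ
  mul_mem i j a b ha hb := by
    simp only [Submodule.mem_comap, AlgHom.toLinearMap_apply, map_mul] at ha hb ⊢
    exact SetLike.mul_mem_graded ha hb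

theorem DirectSum.Decomposition.eq_of_le_of_iSup_eq_top {ι R A : Type*} [DecidableEq ι]
    [Semiring R] [AddCommMonoid A] [Module R A] (𝒜 : ι → Submodule R A) [Decomposition 𝒜]
    {M : ι → Submodule R A} (hle : ∀ i, M i ≤ 𝒜 i) (htop : ⨆ i, M i = ⊤) : M = 𝒜 := by
  funext i
  refine le_antisymm (hle i) fun x hx => ?_
  have : (decompose 𝒜 x i : A) ∈ M i := by
    refine Submodule.iSup_induction M (motive := fun y => (decompose 𝒜 y i : A) ∈ M i)
      (htop ▸ Submodule.mem_top) (fun j y hy => ?_) (by simp) (fun y z hy hz => ?_)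
    · obtain rfl | hji := eq_or_ne j i
      · rwa [decompose_of_mem_same 𝒜 (hle j hy)]
      · rw [decompose_of_mem_ne 𝒜 (hle j hy) hji]
        exact zero_mem _
    · rw [decompose_add, add_apply, Submodule.coe_add]
      exact add_mem hy hz
  rwa [decompose_of_mem_same 𝒜 hx] at this

theorem Submodule.iSup_eq_top_of_adjoin_eq_top {ι R A : Type*} [AddMonoid ι] [CommSemiring R]
    [Semiring A] [Algebra R A] (M : ι → Submodule R A) [SetLike.GradedMonoid M] {X : Set A}
    (hX : X ⊆ (⨆ i, M i : Submodule R A)) (hgen : Algebra.adjoin R X = ⊤) : ⨆ i, M i = ⊤ := by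
  classical
  rw [Submodule.iSup_eq_toSubmodule_range] at hX ⊢
  rw [Algebra.toSubmodule_eq_top, eq_top_iff, ← hgen]
  exact Algebra.adjoin_le hX

namespace IsFreeGradedCommOn

variable {k} {S : Type v} [Ring S] [Algebra k S] {𝒮 : ℕ → Submodule k S} [SetLike.GradedMonoid 𝒮]
  {V : ℕ → Submodule k S}

theorem algHom_eq_id (hS : IsFreeGradedCommOn k 𝒮 V) (F : S →ₐ[k] S)
    (hF : ∀ i, ∀ v ∈ V i, F v = v) : F = AlgHom.id k S :=
  (hS.2.2 S inferInstance inferInstance 𝒮 (fun _ _ _ ha _ hb => SetLike.mul_mem_graded ha hb)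
    hS.2.1 (fun i => (V i).subtype) (fun i v => hS.1 i v.2)).unique
    (fun i v => hF i v v.2) (fun _ _ => rfl)

theorem adjoin_eq_top (hS : IsFreeGradedCommOn k 𝒮 V) :
    Algebra.adjoin k (⋃ i, (V i : Set S)) = ⊤ := by
  set A := Algebra.adjoin k (⋃ i, (V i : Set S))
  have h𝒜 := SetLike.GradedMonoid.comap 𝒮 A.val
  obtain ⟨F, hF, -⟩ := hS.2.2 A inferInstance inferInstance (fun i => (𝒮 i).comap A.val.toLinearMap)
    (fun _ _ _ ha _ hb => h𝒜.mul_mem ha hb) (hS.2.1.comap A.val Subtype.val_injective)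
    (fun i => (LinearMap.codRestrict A.toSubmodule (V i).subtype
      fun v => Algebra.subset_adjoin (Set.mem_iUnion_of_mem i v.2)))
    (fun i v => hS.1 i v.2)
  have hsection : A.val.comp F = AlgHom.id k S :=
    hS.algHom_eq_id _ fun i v hv => congrArg Subtype.val (hF i ⟨v, hv⟩)
  refine eq_top_iff.2 fun s _ => ?_
  rw [← AlgHom.id_apply (R := k) s, ← hsection]
  exact (F s).2

end IsFreeGradedCommOn

section TruncatedAgreement

variable {R A B : Type*} [CommRing R] [Ring A] [Ring B] [Algebra R A] [Algebra R B]
  (𝒜 : ℕ → Submodule R A) (n : ℕ) (Φ : A →ₐ[R] B) (j : ∀ i, 𝒜 i →ₗ[R] B)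

def truncatedEqLocus (i : ℕ) : Submodule R A :=
  if i = 0 then R ∙ 1
  else if i ≤ n then (LinearMap.eqLocus (Φ.toLinearMap ∘ₗ (𝒜 i).subtype) (j i)).map (𝒜 i).subtype
  else 𝒜 i

variable {𝒜 n Φ j}

theorem mem_truncatedEqLocus {i : ℕ} (hi : 1 ≤ i) (hin : i ≤ n) {a : A} :
    a ∈ truncatedEqLocus 𝒜 n Φ j i ↔ ∃ ha : a ∈ 𝒜 i, Φ a = j i ⟨a, ha⟩ := by
  simp only [truncatedEqLocus, if_neg (Nat.one_le_iff_ne_zero.1 hi), if_pos hin,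
    Submodule.mem_map, LinearMap.mem_eqLocus, LinearMap.comp_apply, Submodule.subtype_apply,
    AlgHom.toLinearMap_apply]
  exact ⟨fun ⟨a', h, ha'⟩ => ha' ▸ ⟨a'.2, h⟩, fun ⟨ha, h⟩ => ⟨⟨a, ha⟩, h, rfl⟩⟩

variable [SetLike.GradedMonoid 𝒜]

theorem truncatedEqLocus_le (i : ℕ) : truncatedEqLocus 𝒜 n Φ j i ≤ 𝒜 i := by
  unfold truncatedEqLocus
  split_ifs with h0
  · subst h0
    exact (Submodule.span_singleton_le_iff_mem _ _).2 (SetLike.one_mem_graded 𝒜)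
  · exact Submodule.map_subtype_le _ _
  · exact le_rfl

theorem gradedMonoid_truncatedEqLocus
    (hj : ∀ p q, 1 ≤ p → 1 ≤ q → p + q ≤ n → ∀ (a : 𝒜 p) (b : 𝒜 q),
      j (p + q) ⟨a * b, SetLike.mul_mem_graded a.2 b.2⟩ = j p a * j q b) :
    SetLike.GradedMonoid (truncatedEqLocus 𝒜 n Φ j) where
  one_mem := by simp [truncatedEqLocus]
  mul_mem p q a b ha hb := by
    rcases Nat.eq_zero_or_pos p with rfl | hp
    · obtain ⟨c, rfl⟩ := Submodule.mem_span_singleton.1 (by simpa [truncatedEqLocus] using ha)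
      simpa using Submodule.smul_mem _ c hb
    rcases Nat.eq_zero_or_pos q with rfl | hq
    · obtain ⟨c, rfl⟩ := Submodule.mem_span_singleton.1 (by simpa [truncatedEqLocus] using hb)
      simpa using Submodule.smul_mem _ c ha
    by_cases hpq : p + q ≤ n
    · obtain ⟨ha, hΦa⟩ := (mem_truncatedEqLocus hp (by omega)).1 ha
      obtain ⟨hb, hΦb⟩ := (mem_truncatedEqLocus hq (by omega)).1 hb
      refine (mem_truncatedEqLocus (by omega) hpq).2 ⟨SetLike.mul_mem_graded ha hb, ?_⟩
      rw [map_mul, hΦa, hΦb, hj p q hp hq hpq ⟨a, ha⟩ ⟨b, hb⟩]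
    · have hab := SetLike.mul_mem_graded (truncatedEqLocus_le p ha) (truncatedEqLocus_le q hb)
      rwa [truncatedEqLocus, if_neg (by omega), if_neg hpq]

end TruncatedAgreement

theorem AlgHom.eq_of_eqOn_generators_of_truncated_mul {R A B : Type*} [CommRing R] [Ring A]
    [Ring B] [Algebra R A] [Algebra R B] (𝒜 : ℕ → Submodule R A) [GradedAlgebra 𝒜] {n : ℕ}
    {Φ : A →ₐ[R] B} {j : ∀ i, 𝒜 i →ₗ[R] B} {V : ℕ → Submodule R A} (hV : ∀ i, V i ≤ 𝒜 i)
    (hV0 : V 0 = ⊥) (hgen : Algebra.adjoin R (⋃ i, (V i : Set A)) = ⊤)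
    (hj : ∀ p q, 1 ≤ p → 1 ≤ q → p + q ≤ n → ∀ (a : 𝒜 p) (b : 𝒜 q),
      j (p + q) ⟨a * b, SetLike.mul_mem_graded a.2 b.2⟩ = j p a * j q b)
    (hΦ : ∀ i, 1 ≤ i → i ≤ n → ∀ v (hv : v ∈ V i), Φ v = j i ⟨v, hV i hv⟩)
    {i : ℕ} (hi : 1 ≤ i) (hin : i ≤ n) (a : 𝒜 i) : Φ a = j i a := by
  have := gradedMonoid_truncatedEqLocus (Φ := Φ) hj
  have hgens : ⋃ i, (V i : Set A) ⊆ (⨆ i, truncatedEqLocus 𝒜 n Φ j i : Submodule R A) := by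
    refine Set.iUnion_subset fun i v hv => Submodule.mem_iSup_of_mem i ?_
    rcases Nat.eq_zero_or_pos i with rfl | hi
    · rw [hV0, SetLike.mem_coe, Submodule.mem_bot] at hv
      exact hv ▸ zero_mem _
    by_cases hin : i ≤ n
    · exact (mem_truncatedEqLocus hi hin).2 ⟨hV i hv, hΦ i hi hin v hv⟩
    · rw [truncatedEqLocus, if_neg (by omega), if_neg hin]
      exact hV i hv
  have heq := Decomposition.eq_of_le_of_iSup_eq_top 𝒜 truncatedEqLocus_le
    (Submodule.iSup_eq_top_of_adjoin_eq_top _ hgens hgen)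
  exact ((mem_truncatedEqLocus hi hin).1 ((congrFun heq i).ge a.2)).2

theorem RingQuot.exists_lift_of_apply_ι_eq {R S T : Type*} [CommRing R] [Ring S] [Ring T]
    [Algebra R S] [Algebra R T] (𝒮 : ℕ → Submodule R S) [SetLike.GradedMonoid 𝒮] {n : ℕ}
    {ι : ∀ i, 𝒮 i →ₗ[R] T} {rel : T → T → Prop}
    (hrel : ∀ x y, rel x y → ∃ (i j : ℕ) (_ : 1 ≤ i) (_ : 1 ≤ j) (_ : i + j ≤ n)
      (ω : 𝒮 i) (η : 𝒮 j),
        x = ι i ω * ι j η ∧ y = ι (i + j) ⟨ω * η, SetLike.mul_mem_graded ω.2 η.2⟩)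
    (G : T →ₐ[R] S) (hG : ∀ i, 1 ≤ i → i ≤ n → ∀ s : 𝒮 i, G (ι i s) = s) :
    ∃ Ψ : RingQuot rel →ₐ[R] S,
      ∀ i, 1 ≤ i → i ≤ n → ∀ s : 𝒮 i, Ψ (RingQuot.mkAlgHom R rel (ι i s)) = s := by
  have hGrel : ∀ ⦃x y⦄, rel x y → G x = G y := by
    intro x y h
    obtain ⟨i, j, hi, hj, hij, ω, η, rfl, rfl⟩ := hrel x y h
    rw [map_mul, hG i hi (by omega), hG j hj (by omega), hG (i + j) (by omega) hij]
  exact ⟨RingQuot.liftAlgHom R ⟨G, hGrel⟩, fun i hi hin s => by simp [hG i hi hin]⟩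

/-- Lemma 3.2 of the paper, pointwise form: let `S = S(V)` be the
graded symmetric algebra on a graded vector space `V` in degrees `1..n`, let
`E* = ⊕_{i=1}^n S(V)ᵢ`, and let `T` be the free graded-commutative algebra on
`E*` (with generator inclusions `ι i : 𝒮 i → T` for `1 ≤ i ≤ n`).  Let `I` be
the ideal of `T` generated by all `ι(ω)·ι(η) - ι(ω ∨ η)` with
`|ω| + |η| ≤ n` (here realised as the ring quotient `RingQuot rel` by the
corresponding relation).  Then the natural map `S(V) → T/I`, sending
`v₁ ∨ ... ∨ v_k` to the class of `v₁ · ... · v_k`, is an isomorphism of graded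
algebras. -/
theorem symmetric_algebra_eq_free_mod_ideal
    {S T : Type v} [Ring S] [Ring T] [Algebra k S] [Algebra k T]
    (𝒮 : ℕ → Submodule k S) [GradedAlgebra 𝒮]
    (𝒯 : ℕ → Submodule k T) [GradedAlgebra 𝒯]
    (n : ℕ) (V : ℕ → Submodule k S)
    (hV0 : V 0 = ⊥) (hVn : ∀ i, n < i → V i = ⊥)
    (hS : IsFreeGradedCommOn k 𝒮 V)
    -- generator inclusions of E* = ⊕_{i=1}^n 𝒮 i into T
    (ι : ∀ i, (𝒮 i) →ₗ[k] T)
    (hι : ∀ i, 1 ≤ i → i ≤ n → ∀ v, ι i v ∈ 𝒯 i)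
    (hTcomm : IsGradedComm k 𝒯)
    -- T is free graded-commutative on E*
    (hTfree : ∀ (D : Type v) (_ : Ring D) (_ : Algebra k D) (𝒟 : ℕ → Submodule k D),
      (∀ (i j : ℕ), ∀ a ∈ 𝒟 i, ∀ b ∈ 𝒟 j, a * b ∈ 𝒟 (i + j)) →
      IsGradedComm k 𝒟 →
      ∀ f : ∀ i, (𝒮 i) →ₗ[k] D, (∀ i, 1 ≤ i → i ≤ n → ∀ v, f i v ∈ 𝒟 i) →
      ∃! F : T →ₐ[k] D, ∀ i, 1 ≤ i → i ≤ n → ∀ v : 𝒮 i, F (ι i v) = f i v)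
    -- the relation generating the ideal I = ⟨ι(ω)·ι(η) - ι(ω ∨ η)⟩
    (rel : T → T → Prop)
    (hrel : ∀ x y, rel x y ↔ ∃ (i j : ℕ) (_ : 1 ≤ i) (_ : 1 ≤ j) (_ : i + j ≤ n)
      (ω : 𝒮 i) (η : 𝒮 j),
        x = ι i ω * ι j η ∧
        y = ι (i + j) ⟨(ω : S) * (η : S), SetLike.mul_mem_graded ω.2 η.2⟩) :
    ∃ Φ : S ≃ₐ[k] RingQuot rel,
      ∀ i (v : V i),
        Φ (v : S) = RingQuot.mkAlgHom k rel (ι i ⟨(v : S), hS.1 i v.2⟩) := by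
  have hVout : ∀ i, ¬(1 ≤ i ∧ i ≤ n) → ∀ v ∈ V i, v = 0 := fun i hi => by
    rcases i with _ | i
    exacts [by simp [hV0], by simp [hVn (i + 1) (by omega)]]
  set π := RingQuot.mkAlgHom k rel
  have h𝒬 := SetLike.GradedMonoid.map 𝒯 π
  obtain ⟨Φ, hΦ, -⟩ := hS.2.2 _ inferInstance inferInstance (fun i => (𝒯 i).map π.toLinearMap)
    (fun _ _ _ ha _ hb => h𝒬.mul_mem ha hb) (hTcomm.map π)
    (fun i => π.toLinearMap ∘ₗ ι i ∘ₗ Submodule.inclusion (hS.1 i)) fun i v => by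
      by_cases hi : 1 ≤ i ∧ i ≤ n
      · exact ⟨_, hι i hi.1 hi.2 _, rfl⟩
      · obtain rfl : v = 0 := Subtype.ext (hVout i hi v v.2)
        simp
  obtain ⟨G, hG, -⟩ := hTfree S inferInstance inferInstance 𝒮
    (fun _ _ _ ha _ hb => SetLike.mul_mem_graded ha hb) hS.2.1 (fun i => (𝒮 i).subtype)
    (fun _ _ _ v => v.2)
  obtain ⟨Ψ, hΨ⟩ := RingQuot.exists_lift_of_apply_ι_eq 𝒮 (fun x y => (hrel x y).1) G hG
  have hΨΦ : Ψ.comp Φ = AlgHom.id k S := hS.algHom_eq_id _ fun i v hv => by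
    by_cases hi : 1 ≤ i ∧ i ≤ n
    · exact (congrArg Ψ (hΦ i ⟨v, hv⟩)).trans (hΨ i hi.1 hi.2 ⟨v, hS.1 i hv⟩)
    · rw [hVout i hi v hv, map_zero]
  have hΦι : ∀ i, 1 ≤ i → i ≤ n → ∀ s : 𝒮 i, Φ s = π (ι i s) :=
    fun _ => AlgHom.eq_of_eqOn_generators_of_truncated_mul 𝒮 (j := fun i => π.toLinearMap ∘ₗ ι i)
      hS.1 hV0 hS.adjoin_eq_top
      (fun p q hp hq hpq a b => (RingQuot.mkAlgHom_rel k
        ((hrel _ _).2 ⟨p, q, hp, hq, hpq, a, b, rfl, rfl⟩)).symm.trans (map_mul π _ _))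
      (fun i _ _ v hv => hΦ i ⟨v, hv⟩)
  have hΦΨ : Φ.comp Ψ = AlgHom.id k (RingQuot rel) :=
    RingQuot.ringQuot_ext' _ _ _ <| (hTfree _ inferInstance inferInstance _
      (fun _ _ _ ha _ hb => h𝒬.mul_mem ha hb) (hTcomm.map π) (fun i => π.toLinearMap ∘ₗ ι i)
      fun i hi hin v => ⟨_, hι i hi hin v, rfl⟩).unique
      (fun i hi hin v => (congrArg Φ (hΨ i hi hin v)).trans (hΦι i hi hin v)) fun _ _ _ _ => rfl
  exact ⟨AlgEquiv.ofAlgHom Φ Ψ hΦΨ hΨΦ, hΦ⟩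
end

section
/- Let E = E_{-1} ⊕ ... ⊕ E_{-n} be a graded vector space concentrated in negative degrees with a coassociative, graded-cocommutative comultiplication μ : E → E ⊗ E, and suppose (E, μ) is admissible, i.e. im(μᵢ) = K^μᵢ for all i ≤ -2, where K^μᵢ is the degree-i constraint space. Then for each k with 1 ≤ k ≤ n, the truncation E^{≤k} = E_{-1} ⊕ ... ⊕ E_{-k} with μ^{≤k} = μ|_{E^{≤k}} is again a coassociative, graded-cocommutative comultiplication and (E^{≤k}, μ^{≤k}) is admissible; moreover K^μᵢ = K^{μ^{≤k}}ᵢ for all i ≥ -k-1. -/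
open TensorProduct

/-- A bundled `k`-module (used to define iterated tensor powers by recursion). -/
structure BMod (k : Type*) [Field k] where
  carrier : Type*
  [acg : AddCommGroup carrier]
  [mod : Module k carrier]

attribute [instance] BMod.acg BMod.mod

variable (k : Type*) [Field k] (E : Type*) [AddCommGroup E] [Module k E]

/-- The `(m+1)`-fold tensor power `E ⊗ (E ⊗ (... ⊗ E))`, bundled. -/
noncomputable def powBMod : ℕ → BMod k
  | 0 => ⟨E⟩
  | (m + 1) => ⟨E ⊗[k] (powBMod m).carrier⟩

/-- The `(m+1)`-fold tensor power of `E`. -/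
noncomputable abbrev TPow (m : ℕ) := (powBMod k E m).carrier

/-- Transport along an equality of tensor-power sizes. -/
noncomputable def castP {m m' : ℕ} (h : m = m') : TPow k E m ≃ₗ[k] TPow k E m' :=
  h ▸ LinearEquiv.refl k (TPow k E m)

/-- Regrouping `(⊗^{a+1} E) ⊗ (⊗^{b+1} E)` as `⊗^{a+b+2} E`. -/
noncomputable def splice : ∀ a b : ℕ, (TPow k E a ⊗[k] TPow k E b) →ₗ[k] TPow k E (a + b + 1)
  | 0, b => (castP k E (show b + 1 = 0 + b + 1 by omega)).toLinearMap
  | (a + 1), b =>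
      (castP k E (show (a + b + 1) + 1 = (a + 1) + b + 1 by omega)).toLinearMap ∘ₗ
        (TensorProduct.map LinearMap.id (splice a b)) ∘ₗ
        (TensorProduct.assoc k E (TPow k E a) (TPow k E b)).toLinearMap

variable {k E} (β : E ⊗[k] E →ₗ[k] E ⊗[k] E)

/-- The `j`-th adjacent (Koszul-signed, via `β`) transposition acting on the
`(m+1)`-fold tensor power. -/
noncomputable def sAdj : ∀ (m j : ℕ), TPow k E m →ₗ[k] TPow k E m
  | 0, _ => LinearMap.id
  | 1, 0 => LinearMap.id
  | (m + 2), 0 =>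
      (TensorProduct.assoc k E E (TPow k E m)).toLinearMap ∘ₗ
        (TensorProduct.map β LinearMap.id) ∘ₗ
        (TensorProduct.assoc k E E (TPow k E m)).symm.toLinearMap
  | (m + 1), (j + 1) => TensorProduct.map LinearMap.id (sAdj m j)

/-- The monoid of all (signed) permutation operators on the `(m+1)`-fold tensor
power generated by the adjacent transpositions: these realize all Koszul-signed
permutations of `S_{m+1}`. -/
noncomputable def OpsSet (m : ℕ) : Submonoid (Module.End k (TPow k E m)) :=
  Submonoid.closure {f | ∃ j, f = sAdj β m j}

/-- The iterated comultiplication `μ^a : E → ⊗^{a+1} E`,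
`μ^a = (id ⊗ μ^{a-1}) ∘ μ`, `μ^0 = id`. -/
noncomputable def μpow (μ : E →ₗ[k] E ⊗[k] E) : ∀ a : ℕ, E →ₗ[k] TPow k E a
  | 0 => LinearMap.id
  | (a + 1) => (TensorProduct.map LinearMap.id (μpow μ a)) ∘ₗ μ

variable (k E)

/-- The degree-`i` part of `E ⊗ E` for a grading `𝒠` of `E`. -/
noncomputable def TensorDeg (𝒠 : ℤ → Submodule k E) (i : ℤ) : Submodule k (E ⊗[k] E) :=
  Submodule.span k {x | ∃ (a b : ℤ) (u : E) (v : E),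
    a + b = i ∧ u ∈ 𝒠 a ∧ v ∈ 𝒠 b ∧ x = u ⊗ₜ[k] v}

variable {k E}

/-- The constraint space `K^μ_i ⊆ (E ⊗ E)_i`: the degree-`i` elements on which
all iterated comultiplications `(μ^a ⊗ μ^b)` with equal total `a + b`, composed
with arbitrary Koszul-signed permutations, agree. -/
noncomputable def Kset (𝒠 : ℤ → Submodule k E) (μ : E →ₗ[k] E ⊗[k] E) (i : ℤ) :
    Set (E ⊗[k] E) :=
  {e | e ∈ TensorDeg k E 𝒠 i ∧
    ∀ (a b a' b' : ℕ) (hab : a + b = a' + b'),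
      ∀ w ∈ OpsSet β (a + b + 1), ∀ w' ∈ OpsSet β (a' + b' + 1),
        w (splice k E a b (TensorProduct.map (μpow μ a) (μpow μ b) e)) =
          castP k E (show a' + b' + 1 = a + b + 1 by omega)
            (w' (splice k E a' b' (TensorProduct.map (μpow μ a') (μpow μ b') e)))}

/-- let `E = E₋₁ ⊕ ... ⊕ E₋ₙ` be graded in degrees `-n,...,-1`
(grading `𝒠`), with Koszul braiding `β`, and let `μ : E → E ⊗ E` be a
degree-preserving, coassociative, graded-cocommutative comultiplication which
is admissible, i.e. `im(μᵢ) = K^μᵢ` for `-n ≤ i ≤ -2`.  Then for each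
`1 ≤ c ≤ n`, the truncation `E^{≤c}` (grading `𝒠'` keeping only degrees
`≥ -c`) with `μ^{≤c} = μ|` is again a coassociative, graded-cocommutative,
degree-preserving comultiplication and is admissible; moreover
`K^μᵢ = K^{μ^{≤c}}ᵢ` for all `i ≥ -c - 1`. -/
theorem truncation_of_admissible_is_admissible
    (n : ℕ) (𝒠 : ℤ → Submodule k E)
    (hsupp : ∀ i : ℤ, (i < -(n : ℤ) ∨ (-1 : ℤ) < i) → 𝒠 i = ⊥)
    (hspan : (⨆ i : ℤ, 𝒠 i) = ⊤)
    (hβ : ∀ (i j : ℤ), ∀ u ∈ 𝒠 i, ∀ v ∈ 𝒠 j,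
      β (u ⊗ₜ[k] v) = (Int.negOnePow (i * j) : ℤ) • (v ⊗ₜ[k] u))
    (μ : E →ₗ[k] E ⊗[k] E)
    -- μ is degree-preserving
    (hdeg : ∀ i : ℤ, (𝒠 i).map μ ≤ TensorDeg k E 𝒠 i)
    -- μ is coassociative
    (hcoassoc : (TensorProduct.map LinearMap.id μ) ∘ₗ μ =
      (TensorProduct.assoc k E E E).toLinearMap ∘ₗ (TensorProduct.map μ LinearMap.id) ∘ₗ μ)
    -- μ is graded-cocommutative: τ·μ = μ
    (hcocomm : β ∘ₗ μ = μ)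
    -- μ is admissible
    (hadm : ∀ i : ℤ, -(n : ℤ) ≤ i → i ≤ -2 →
      (((𝒠 i).map μ : Submodule k (E ⊗[k] E)) : Set (E ⊗[k] E)) = Kset β 𝒠 μ i) :
    ∀ c : ℕ, 1 ≤ c → c ≤ n →
      ∀ 𝒠' : ℤ → Submodule k E, (𝒠' = fun i => if -(c : ℤ) ≤ i then 𝒠 i else ⊥) →
      -- μ^{≤c} := μ is still degree-preserving for the truncated grading,
      (∀ i : ℤ, (𝒠' i).map μ ≤ TensorDeg k E 𝒠' i) ∧
      -- still coassociative and cocommutative (β restricting to the Koszul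
      -- braiding of the truncation),
      ((TensorProduct.map LinearMap.id μ) ∘ₗ μ =
        (TensorProduct.assoc k E E E).toLinearMap ∘ₗ
          (TensorProduct.map μ LinearMap.id) ∘ₗ μ) ∧
      (β ∘ₗ μ = μ) ∧
      (∀ (i j : ℤ), ∀ u ∈ 𝒠' i, ∀ v ∈ 𝒠' j,
        β (u ⊗ₜ[k] v) = (Int.negOnePow (i * j) : ℤ) • (v ⊗ₜ[k] u)) ∧
      -- the truncation is admissible,
      (∀ i : ℤ, -(c : ℤ) ≤ i → i ≤ -2 →
        (((𝒠' i).map μ : Submodule k (E ⊗[k] E)) : Set (E ⊗[k] E)) = Kset β 𝒠' μ i) ∧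
      -- and the constraint spaces agree in degrees ≥ -c - 1.
      (∀ i : ℤ, -(c : ℤ) - 1 ≤ i → Kset β 𝒠 μ i = Kset β 𝒠' μ i) := by
  intro c hc1 hcn 𝒠' h𝒠'
  have hcn' : (c : ℤ) ≤ (n : ℤ) := by exact_mod_cast hcn
  subst h𝒠'
  have hle : ∀ i : ℤ, (if -(c:ℤ) ≤ i then 𝒠 i else ⊥) ≤ 𝒠 i := by
    intro i; split <;> simp
  -- TensorDeg agreement in degrees ≥ -c - 1
  have hTD : ∀ i : ℤ, -(c:ℤ) - 1 ≤ i →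
      TensorDeg k E 𝒠 i =
        TensorDeg k E (fun i => if -(c:ℤ) ≤ i then 𝒠 i else ⊥) i := by
    intro i hi
    apply le_antisymm
    · apply Submodule.span_le.2
      rintro x ⟨a, b, u, v, hab, hu, hv, rfl⟩
      by_cases ha : a < -(n:ℤ) ∨ (-1 : ℤ) < a
      · have hu0 : u = 0 := by rw [hsupp a ha] at hu; simpa using hu
        simp [hu0]
      · by_cases hb : b < -(n:ℤ) ∨ (-1 : ℤ) < b
        · have hv0 : v = 0 := by rw [hsupp b hb] at hv; simpa using hv
          simp [hv0]
        · push_neg at ha hb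
          have hac : -(c:ℤ) ≤ a := by omega
          have hbc : -(c:ℤ) ≤ b := by omega
          exact Submodule.subset_span
            ⟨a, b, u, v, hab, by simp [hac, hu], by simp [hbc, hv], rfl⟩
    · apply Submodule.span_le.2
      rintro x ⟨a, b, u, v, hab, hu, hv, rfl⟩
      exact Submodule.subset_span ⟨a, b, u, v, hab, hle a hu, hle b hv, rfl⟩
  -- Kset agreement in degrees ≥ -c - 1
  have hK : ∀ i : ℤ, -(c:ℤ) - 1 ≤ i →
      Kset β 𝒠 μ i = Kset β (fun i => if -(c:ℤ) ≤ i then 𝒠 i else ⊥) μ i := by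
    intro i hi
    unfold Kset
    rw [hTD i hi]
  refine ⟨?_, hcoassoc, hcocomm, ?_, ?_, hK⟩
  · -- degree-preserving
    intro i
    by_cases hi : -(c:ℤ) ≤ i
    · simp only [hi, if_pos]
      refine le_trans (hdeg i) ?_
      rw [hTD i (by omega)]
    · simp [hi]
  · -- braiding
    intro i j u hu v hv
    exact hβ i j u (hle i hu) v (hle j hv)
  · -- admissibility of the truncation
    intro i hic hi2
    show (Submodule.map μ (if -(c:ℤ) ≤ i then 𝒠 i else ⊥) : Set (E ⊗[k] E)) = _
    rw [if_pos hic, hadm i (by omega) hi2, hK i (by omega)]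
end
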